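/- arXiv:1410.0142 — 2 statements merged into one kernel-verified Lean document; each statement's English description precedes it below -/
import Mathlib

section
/- Let r,s,t,u be integers with ru−st=±1 and s even. Then there is a (unique) group homomorphism φ₂ : G(r,s,t,u) → ℤ/2ℤ sending the generators a ↦ 0, b ↦ 1, c ↦ 0, and its kernel is isomorphic, as an abstract group, to G(r, s/2, 2t, u). -/
/-- The relators of the presentation of the fundamental group of the sapphire
Sol 3-manifold determined by the matrix `[[r, s], [t, u]]`:
`a·b·a⁻¹·b`, `c²·a^(−2r)·b^(−s)` and `c·a^(2t)·b^u·c⁻¹·a^(2t)·b^u`,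
where `a, b, c` are the generators `of 0, of 1, of 2`. -/
def sapphireRels (r s t u : ℤ) : Set (FreeGroup (Fin 3)) :=
  { FreeGroup.of 0 * FreeGroup.of 1 * (FreeGroup.of 0)⁻¹ * FreeGroup.of 1,
    FreeGroup.of 2 ^ (2 : ℤ) * FreeGroup.of 0 ^ (-(2 * r)) * FreeGroup.of 1 ^ (-s),
    FreeGroup.of 2 * FreeGroup.of 0 ^ (2 * t) * FreeGroup.of 1 ^ u * (FreeGroup.of 2)⁻¹ *
      FreeGroup.of 0 ^ (2 * t) * FreeGroup.of 1 ^ u }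

/-- The fundamental group `G(r,s,t,u)` of the sapphire Sol 3-manifold. -/
abbrev SapphireGroup (r s t u : ℤ) := PresentedGroup (sapphireRels r s t u)


/-!
Let `ψ : G(r, s/2, 2t, u) → G(r,s,t,u)` send `a ↦ a, b ↦ b², c ↦ c`; it lands in `ker φ`. On the
lattice `⟨a², b⟩ ≅ ℤ²`, conjugation by `c` fixes `a^(2r) b^s` and inverts `a^(2t) b^u`; since
`ru - st = ±1` these two elements form a basis, which gives an explicit formula for conjugation by
`c`. With it, `b` normalizes the range of `ψ`; as `b² ∈ range ψ` and `φ b ≠ 1`, the range is all of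
`ker φ`. For injectivity, `G(r,s,t,u)` maps to the wreath product `G(r, s/2, 2t, u) ≀ ℤ/2`
(the Kaloujnine–Krasner embedding, written down on generators), and the first coordinate of this
map is a left inverse of `ψ`.
-/

section Lattice

variable {H : Type*} [Group H] {x y : H}

theorem Commute.zpow_mul_zpow_mul_zpow_mul_zpow (h : Commute x y) (p q p' q' : ℤ) :
    x ^ p * y ^ q * (x ^ p' * y ^ q') = x ^ (p + p') * y ^ (q + q') := by
  rw [(h.zpow_zpow p' q).symm.mul_mul_mul_comm, zpow_add, zpow_add]

theorem Commute.zpow_mul_zpow_zpow (h : Commute x y) (p q n : ℤ) :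
    (x ^ p * y ^ q) ^ n = x ^ (p * n) * y ^ (q * n) := by
  rw [(h.zpow_zpow p q).mul_zpow, zpow_mul, zpow_mul]

theorem Commute.conj_zpow_mul_zpow {c : H} {r s t u D : ℤ} (h : Commute x y)
    (hdet : r * u - s * t = D) (hD : D * D = 1)
    (hX : c * (x ^ t * y ^ u) * c⁻¹ = (x ^ t * y ^ u)⁻¹)
    (hY : c * (x ^ r * y ^ s) * c⁻¹ = x ^ r * y ^ s) (p q : ℤ) :
    c * (x ^ p * y ^ q) * c⁻¹ =
      x ^ (p + 2 * D * (s * p - r * q) * t) * y ^ (q + 2 * D * (s * p - r * q) * u) := by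
  -- the coordinates of `(p, q)` in the basis `(t, u), (r, s)`
  set α := -(D * (s * p - r * q))
  set β := D * (u * p - t * q)
  have hbasis : ∀ n, (x ^ t * y ^ u) ^ n * (x ^ r * y ^ s) ^ β =
      x ^ (t * n + r * β) * y ^ (u * n + s * β) := fun n => by
    rw [h.zpow_mul_zpow_zpow, h.zpow_mul_zpow_zpow, h.zpow_mul_zpow_mul_zpow_mul_zpow]
  calc c * (x ^ p * y ^ q) * c⁻¹
      = c * ((x ^ t * y ^ u) ^ α * (x ^ r * y ^ s) ^ β) * c⁻¹ := by
        rw [hbasis, show t * α + r * β = p by linear_combination D * p * hdet + p * hD,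
          show u * α + s * β = q by linear_combination D * q * hdet + q * hD]
    _ = (x ^ t * y ^ u) ^ (-α) * (x ^ r * y ^ s) ^ β := by
        have hconj : ∀ g, c * g * c⁻¹ = MulAut.conj c g := fun _ => rfl
        rw [hconj, map_mul, map_zpow, map_zpow, ← hconj, ← hconj, hX, hY, inv_zpow']
    _ = _ := by
        rw [hbasis]
        congr 2
        · linear_combination D * p * hdet + p * hD
        · linear_combination D * q * hdet + q * hD

end Lattice

theorem Subgroup.mem_or_inv_mul_mem_of_mul_self_mem {G : Type*} [Group G] {K : Subgroup G} {b : G}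
    (hb : b * b ∈ K) (hconj : ∀ g ∈ K, b * g * b⁻¹ ∈ K)
    (hgen : Subgroup.closure (insert b (K : Set G)) = ⊤) (g : G) : g ∈ K ∨ b⁻¹ * g ∈ K := by
  have hconj' : ∀ g ∈ K, b⁻¹ * g * b ∈ K := fun g hg => by
    have := K.mul_mem (K.mul_mem (K.inv_mem hb) (hconj g hg)) hb
    rwa [show (b * b)⁻¹ * (b * g * b⁻¹) * (b * b) = b⁻¹ * g * b by group] at this
  have hg : g ∈ Subgroup.closure (insert b (K : Set G)) := hgen ▸ Subgroup.mem_top g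
  induction hg using Subgroup.closure_induction with
  | mem x hx =>
    rcases hx with rfl | hx
    · exact Or.inr (by simp)
    · exact Or.inl hx
  | one => exact Or.inl K.one_mem
  | mul x y _ _ hx hy =>
    rcases hx with hx | hx <;> rcases hy with hy | hy
    · exact Or.inl (K.mul_mem hx hy)
    · exact Or.inr (by simpa [mul_assoc] using K.mul_mem (hconj' x hx) hy)
    · exact Or.inr (by simpa [mul_assoc] using K.mul_mem hx hy)
    · exact Or.inl (by simpa [mul_assoc] using K.mul_mem (K.mul_mem (hconj _ hx) hb) hy)
  | inv x _ hx =>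
    rcases hx with hx | hx
    · exact Or.inl (K.inv_mem hx)
    · exact Or.inr (by simpa [mul_assoc] using K.mul_mem (hconj' _ (K.inv_mem hx)) (K.inv_mem hb))

section Wreath

open SemidirectProduct

variable (Q : Type*) [Group Q]

def swapAction : Multiplicative (ZMod 2) →* MulAut (Q × Q) where
  toFun e := MulEquiv.prodComm ^ e.toAdd.val
  map_one' := pow_zero _
  map_mul' e d := by
    have hsq : (MulEquiv.prodComm : Q × Q ≃* Q × Q) ^ 2 = 1 := by ext <;> rfl
    rw [toAdd_mul, ZMod.val_add, ← pow_add, ← pow_eq_pow_mod _ hsq]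

abbrev WreathTwo := (Q × Q) ⋊[swapAction Q] Multiplicative (ZMod 2)

variable {Q}

@[simp]
theorem swapAction_ofAdd_one (x : Q × Q) : swapAction Q (.ofAdd 1) x = x.swap := rfl

theorem WreathTwo.inl_mul_inr_zpow_two_mul (B : Q) (n : ℤ) :
    (inl (1, B) * inr (.ofAdd 1) : WreathTwo Q) ^ (2 * n) = inl (B ^ n, B ^ n) := by
  have hsq : (inl (1, B) * inr (.ofAdd 1) : WreathTwo Q) ^ (2 : ℤ) = inl (B, B) := by
    rw [zpow_two]
    ext <;> simp
    decide
  rw [zpow_mul, hsq, ← map_zpow, Prod.pow_mk]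

def WreathTwo.fstOfKer : (rightHom : WreathTwo Q →* Multiplicative (ZMod 2)).ker →* Q where
  toFun g := g.1.left.1
  map_one' := rfl
  map_mul' g g' := by
    have hg : g.1.right = 1 := g.2
    simp [mul_left, hg]

@[simp]
theorem WreathTwo.fstOfKer_apply (g : (rightHom : WreathTwo Q →* Multiplicative (ZMod 2)).ker) :
    WreathTwo.fstOfKer g = g.1.left.1 :=
  rfl

end Wreath

section Relations

variable {H : Type*} [Group H]

structure SapphireRelations (r s t u : ℤ) (a b c : H) : Prop where
  rel_ab : a * b * a⁻¹ * b = 1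
  rel_sq : c ^ (2 : ℤ) * a ^ (-(2 * r)) * b ^ (-s) = 1
  rel_conj : c * a ^ (2 * t) * b ^ u * c⁻¹ * a ^ (2 * t) * b ^ u = 1

namespace SapphireRelations

variable {r s t u D : ℤ} {a b c : H}

theorem lift_eq_one (h : SapphireRelations r s t u a b c) :
    ∀ w ∈ sapphireRels r s t u, FreeGroup.lift ![a, b, c] w = 1 := by
  simp only [sapphireRels, Set.mem_insert_iff, Set.mem_singleton_iff]
  rintro w (rfl | rfl | rfl)
  · simpa using h.rel_ab
  · simpa using h.rel_sq
  · simpa using h.rel_conj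

theorem a_conj_b (h : SapphireRelations r s t u a b c) : a * b * a⁻¹ = b⁻¹ :=
  mul_eq_one_iff_eq_inv.mp h.rel_ab

theorem b_conj_a (h : SapphireRelations r s t u a b c) : b * a * b⁻¹ = a * (b * b)⁻¹ := by
  calc b * a * b⁻¹ = (a * b * a⁻¹)⁻¹ * a * b⁻¹ := by rw [h.a_conj_b, inv_inv]
    _ = a * (b * b)⁻¹ := by group

theorem mul_inv_sq (h : SapphireRelations r s t u a b c) : (a * b⁻¹) ^ (2 : ℤ) = a ^ (2 : ℤ) := by
  have hba : b⁻¹ * a = a * b := by rw [← h.a_conj_b]; group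
  rw [zpow_two, zpow_two, mul_assoc, ← mul_assoc b⁻¹, hba]
  group

theorem commute_a_sq_b (h : SapphireRelations r s t u a b c) : Commute (a ^ (2 : ℤ)) b := by
  have hconj : a ^ (2 : ℤ) * b * (a ^ (2 : ℤ))⁻¹ = b := by
    calc a ^ (2 : ℤ) * b * (a ^ (2 : ℤ))⁻¹ = a * (a * b * a⁻¹) * a⁻¹ := by rw [zpow_two]; group
      _ = a * b⁻¹ * a⁻¹ := by rw [h.a_conj_b]
      _ = (a * b * a⁻¹)⁻¹ := by group
      _ = b := by rw [h.a_conj_b, inv_inv]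
  exact mul_inv_eq_iff_eq_mul.mp hconj

theorem c_sq (h : SapphireRelations r s t u a b c) : c ^ (2 : ℤ) = (a ^ (2 : ℤ)) ^ r * b ^ s := by
  rw [(h.commute_a_sq_b.zpow_zpow r s).eq, ← zpow_mul]
  refine mul_inv_eq_one.mp ?_
  rw [← h.rel_sq]
  group

theorem c_conj_inv (h : SapphireRelations r s t u a b c) :
    c * ((a ^ (2 : ℤ)) ^ t * b ^ u) * c⁻¹ = ((a ^ (2 : ℤ)) ^ t * b ^ u)⁻¹ := by
  rw [← zpow_mul, ← mul_eq_one_iff_eq_inv, ← h.rel_conj]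
  group

theorem c_conj_fixed (h : SapphireRelations r s t u a b c) :
    c * ((a ^ (2 : ℤ)) ^ r * b ^ s) * c⁻¹ = (a ^ (2 : ℤ)) ^ r * b ^ s := by
  rw [← h.c_sq]
  group

theorem c_conj_zpow_mul_zpow (h : SapphireRelations r s t u a b c) (hdet : r * u - s * t = D)
    (hD : D * D = 1) (p q : ℤ) :
    c * ((a ^ (2 : ℤ)) ^ p * b ^ q) * c⁻¹ =
      (a ^ (2 : ℤ)) ^ (p + 2 * D * (s * p - r * q) * t) *
        b ^ (q + 2 * D * (s * p - r * q) * u) :=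
  h.commute_a_sq_b.conj_zpow_mul_zpow hdet hD h.c_conj_inv h.c_conj_fixed p q

theorem b_conj_c (h : SapphireRelations r s t u a b c) (hdet : r * u - s * t = D)
    (hD : D * D = 1) :
    b * c * b⁻¹ = (a ^ (2 : ℤ)) ^ (2 * D * r * t) * (b * b) ^ (D * r * u) * c := by
  have hcb := h.c_conj_zpow_mul_zpow hdet hD 0 1
  rw [zpow_zero, one_mul, zpow_one] at hcb
  calc b * c * b⁻¹ = b * (c * b * c⁻¹)⁻¹ * c := by group
    _ = b ^ (1 - (1 + 2 * D * (s * 0 - r * 1) * u)) *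
          (a ^ (2 : ℤ)) ^ (-(0 + 2 * D * (s * 0 - r * 1) * t)) * c := by
        rw [hcb, zpow_sub, zpow_one, zpow_neg]
        group
    _ = _ := by
        rw [← (h.commute_a_sq_b.zpow_zpow _ _).eq, ← zpow_two b, ← zpow_mul b]
        congr 3 <;> ring

theorem zpow_mul_c_sq (h : SapphireRelations r s t u a b c) (n : ℤ) :
    (((a ^ (2 : ℤ)) ^ t * b ^ u) ^ n * c) ^ (2 : ℤ) = c ^ (2 : ℤ) := by
  calc (((a ^ (2 : ℤ)) ^ t * b ^ u) ^ n * c) ^ (2 : ℤ)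
      = ((a ^ (2 : ℤ)) ^ t * b ^ u) ^ n * (c * ((a ^ (2 : ℤ)) ^ t * b ^ u) ^ n * c⁻¹) *
          c ^ (2 : ℤ) := by
        rw [zpow_two, zpow_two]
        group
    _ = c ^ (2 : ℤ) := by rw [← conj_zpow, h.c_conj_inv, inv_zpow, mul_inv_cancel, one_mul]

-- For `u = 2k + 1`, `(a²)^t b^k` and `(a²)^t b^(k+1)` are the coordinates of the image of
-- `a^(2t) b^u` in the wreath product; the next two identities are the coordinates of the third
-- relator there (see `SapphireRelations.wreath`).

theorem c_conj_lower_half_eq_one {k : ℤ} (h : SapphireRelations r s (2 * t) u a b c)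
    (hdet : r * u - s * (2 * t) = D) (hD : D * D = 1) (hk : u = 2 * k + 1) :
    c * ((a ^ (2 : ℤ)) ^ t * b ^ k) * c⁻¹ *
      (((a ^ (2 : ℤ)) ^ (2 * t) * b ^ u) ^ (-(r * D)) * ((a ^ (2 : ℤ)) ^ t * b ^ (k + 1))) = 1 := by
  have hab := h.commute_a_sq_b
  rw [h.c_conj_zpow_mul_zpow hdet hD, hab.zpow_mul_zpow_zpow, hab.zpow_mul_zpow_mul_zpow_mul_zpow,
    hab.zpow_mul_zpow_mul_zpow_mul_zpow,
    show t + 2 * D * (s * t - r * k) * (2 * t) + (2 * t * -(r * D) + t) = 0 by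
      linear_combination (-2 * t * D) * hdet + (-2 * t) * hD + (2 * t * D * r) * hk,
    show k + 2 * D * (s * t - r * k) * u + (u * -(r * D) + (k + 1)) = 0 by
      linear_combination (-u * D) * hdet + (-u) * hD + (u * D * r - 1) * hk,
    zpow_zero, zpow_zero, one_mul]

theorem c_conj_upper_half_eq_one {k : ℤ} (h : SapphireRelations r s (2 * t) u a b c)
    (hdet : r * u - s * (2 * t) = D) (hD : D * D = 1) (hk : u = 2 * k + 1) :
    ((a ^ (2 : ℤ)) ^ (2 * t) * b ^ u) ^ (r * D) *
      (c * ((a ^ (2 : ℤ)) ^ t * b ^ (k + 1)) * c⁻¹ * ((a ^ (2 : ℤ)) ^ t * b ^ k)) = 1 := by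
  have hab := h.commute_a_sq_b
  rw [h.c_conj_zpow_mul_zpow hdet hD, hab.zpow_mul_zpow_zpow, hab.zpow_mul_zpow_mul_zpow_mul_zpow,
    hab.zpow_mul_zpow_mul_zpow_mul_zpow,
    show 2 * t * (r * D) + (t + 2 * D * (s * t - r * (k + 1)) * (2 * t) + t) = 0 by
      linear_combination (-2 * t * D) * hdet + (-2 * t) * hD + (2 * t * D * r) * hk,
    show u * (r * D) + (k + 1 + 2 * D * (s * t - r * (k + 1)) * u + k) = 0 by
      linear_combination (-u * D) * hdet + (-u) * hD + (u * D * r - 1) * hk,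
    zpow_zero, zpow_zero, one_mul]

theorem covering {s' : ℤ} (hs : s = 2 * s') (h : SapphireRelations r s t u a b c) :
    SapphireRelations r s' (2 * t) u a (b * b) c where
  rel_ab := by
    calc a * (b * b) * a⁻¹ * (b * b) = (a * b * a⁻¹) * (a * b * a⁻¹) * (b * b) := by group
      _ = 1 := by rw [h.a_conj_b]; group
  rel_sq := by
    rw [← zpow_two, ← zpow_mul, show 2 * -s' = -s by omega]
    exact h.rel_sq
  rel_conj := by
    have hsq : a ^ (2 * (2 * t)) * (b * b) ^ u = ((a ^ (2 : ℤ)) ^ t * b ^ u) ^ (2 : ℤ) := by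
      rw [h.commute_a_sq_b.zpow_mul_zpow_zpow, ← zpow_mul, ← zpow_two, ← zpow_mul, mul_comm t,
        mul_comm u]
    calc c * a ^ (2 * (2 * t)) * (b * b) ^ u * c⁻¹ * a ^ (2 * (2 * t)) * (b * b) ^ u
        = c * (a ^ (2 * (2 * t)) * (b * b) ^ u) * c⁻¹ * (a ^ (2 * (2 * t)) * (b * b) ^ u) := by
          group
      _ = 1 := by rw [hsq, ← conj_zpow, h.c_conj_inv, inv_zpow, inv_mul_cancel]

-- The second coordinate `X^(rD) C` of the image of `c`, with `X = (A²)^(2t) B^u`, squares to `C²`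
-- because `C` inverts `X`; the exponent `rD` is what makes the third relator hold.
open SemidirectProduct in
theorem wreath {Q : Type*} [Group Q] {s' : ℤ} {A B C : Q} (hs : s = 2 * s')
    (hdet : r * u - s * t = D) (hD : D * D = 1) (h : SapphireRelations r s' (2 * t) u A B C) :
    SapphireRelations r s t u (inl (A, A * B⁻¹) : WreathTwo Q) (inl (1, B) * inr (.ofAdd 1))
      (inl (C, ((A ^ (2 : ℤ)) ^ (2 * t) * B ^ u) ^ (r * D) * C)) := by
  have hdet' : r * u - s' * (2 * t) = D := by rw [← hdet, hs]; ring
  obtain ⟨k, hk⟩ : Odd u := by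
    have hru : Odd (r * u) := by
      rw [show r * u = D + 2 * (s' * t) by rw [← hdet, hs]; ring]
      exact (Int.odd_mul.mp (hD ▸ odd_one)).1.add_even (even_two_mul _)
    exact (Int.odd_mul.mp hru).2
  have ha : ∀ n : ℤ, (inl (A, A * B⁻¹) : WreathTwo Q) ^ (2 * n) =
      inl ((A ^ (2 : ℤ)) ^ n, (A ^ (2 : ℤ)) ^ n) := fun n => by
    rw [← map_zpow, Prod.pow_mk, zpow_mul, zpow_mul, h.mul_inv_sq]
  have hbu : (inl (1, B) * inr (.ofAdd 1) : WreathTwo Q) ^ u =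
      inl (B ^ k, B ^ k) * (inl (1, B) * inr (.ofAdd 1)) := by
    rw [hk, zpow_add, zpow_one, WreathTwo.inl_mul_inr_zpow_two_mul]
  refine ⟨?_, ?_, ?_⟩
  · ext <;> simp [← mul_assoc, h.rel_ab]
    decide
  · rw [← map_zpow, Prod.pow_mk, h.zpow_mul_c_sq, show -(2 * r) = 2 * -r by ring, ha, hs,
      show -(2 * s') = 2 * -s' by ring, WreathTwo.inl_mul_inr_zpow_two_mul, ← map_mul, ← map_mul,
      Prod.mk_mul_mk, Prod.mk_mul_mk, ← zpow_mul, show 2 * -r = -(2 * r) by ring, h.rel_sq,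
      Prod.mk_one_one, map_one]
  · rw [ha, hbu]
    ext <;> simp only [mul_left, mul_right, inv_left, inv_right, left_inl, right_inl, left_inr,
      right_inr, one_left, one_right, map_one, MulAut.one_apply, swapAction_ofAdd_one,
      Prod.swap_prod_mk, Prod.mk_mul_mk, Prod.inv_mk, Prod.fst_one, Prod.snd_one, mul_inv_rev,
      inv_one, one_mul, mul_one]
    · refine Eq.trans ?_ (h.c_conj_lower_half_eq_one hdet' hD hk)
      rw [zpow_neg, zpow_add_one]
      group
    · refine Eq.trans ?_ (h.c_conj_upper_half_eq_one hdet' hD hk)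
      rw [zpow_add_one]
      group
    · decide

end SapphireRelations

theorem sapphireRelations_zmod_two {r s t u : ℤ} (hs : Even s) :
    SapphireRelations r s t u (1 : Multiplicative (ZMod 2)) (.ofAdd 1) 1 := by
  have hpow : ∀ n : ℤ, Even n → Multiplicative.ofAdd (1 : ZMod 2) ^ n = 1 := fun n hn => by
    rw [← ofAdd_zsmul, zsmul_one, hn.intCast_zmod_two, ofAdd_zero]
  refine ⟨by decide, by simp [hpow _ hs.neg], ?_⟩
  simp only [one_zpow, one_mul, inv_one, mul_one, ← zpow_add]
  exact hpow _ ⟨u, rfl⟩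

end Relations

namespace SapphireGroup

open PresentedGroup SemidirectProduct

theorem relations_of (r s t u : ℤ) :
    SapphireRelations r s t u (of 0 : SapphireGroup r s t u) (of 1) (of 2) := by
  have hmem : ∀ w ∈ sapphireRels r s t u, PresentedGroup.mk _ w = 1 := fun _ => one_of_mem
  simp only [sapphireRels, Set.forall_mem_insert, Set.mem_singleton_iff, forall_eq] at hmem
  exact ⟨hmem.1, hmem.2.1, hmem.2.2⟩

section Lift

variable {H : Type*} [Group H] {r s t u : ℤ} {a b c : H}

def lift (h : SapphireRelations r s t u a b c) : SapphireGroup r s t u →* H :=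
  toGroup h.lift_eq_one

@[simp]
theorem lift_of_zero (h : SapphireRelations r s t u a b c) : lift h (of 0) = a :=
  toGroup.of _

@[simp]
theorem lift_of_one (h : SapphireRelations r s t u a b c) : lift h (of 1) = b :=
  toGroup.of _

@[simp]
theorem lift_of_two (h : SapphireRelations r s t u a b c) : lift h (of 2) = c :=
  toGroup.of _

theorem hom_ext {f g : SapphireGroup r s t u →* H} (h0 : f (of 0) = g (of 0))
    (h1 : f (of 1) = g (of 1)) (h2 : f (of 2) = g (of 2)) : f = g :=
  PresentedGroup.ext fun i => by fin_cases i <;> assumption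

end Lift

variable {r s s' t u D : ℤ}

def coveringHom (hs : s = 2 * s') : SapphireGroup r s' (2 * t) u →* SapphireGroup r s t u :=
  lift ((relations_of r s t u).covering hs)

def wreathHom (hs : s = 2 * s') (hdet : r * u - s * t = D) (hD : D * D = 1) :
    SapphireGroup r s t u →* WreathTwo (SapphireGroup r s' (2 * t) u) :=
  lift ((relations_of r s' (2 * t) u).wreath hs hdet hD)

theorem coveringHom_injective (hs : s = 2 * s') (hdet : r * u - s * t = D) (hD : D * D = 1) :
    Function.Injective (coveringHom (r := r) (t := t) (u := u) hs) := by
  set θ := wreathHom hs hdet hD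
  have hright : rightHom.comp (θ.comp (coveringHom hs)) = 1 :=
    hom_ext (by simp [θ, coveringHom, wreathHom]) (by simp [θ, coveringHom, wreathHom]; decide)
      (by simp [θ, coveringHom, wreathHom])
  have hker : ∀ g, θ (coveringHom hs g) ∈ (rightHom : WreathTwo _ →* _).ker :=
    DFunLike.congr_fun hright
  have hρ : WreathTwo.fstOfKer.comp ((θ.comp (coveringHom hs)).codRestrict _ hker) =
      MonoidHom.id _ :=
    hom_ext (by simp [θ, coveringHom, wreathHom]) (by simp [θ, coveringHom, wreathHom])
      (by simp [θ, coveringHom, wreathHom])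
  exact Function.LeftInverse.injective (g := fun x => (θ x).left.1) (DFunLike.congr_fun hρ)

theorem conj_mem_range_coveringHom (hs : s = 2 * s') (hdet : r * u - s * t = D) (hD : D * D = 1)
    {g : SapphireGroup r s t u} (hg : g ∈ (coveringHom (t := t) hs).range) :
    of 1 * g * (of 1)⁻¹ ∈ (coveringHom (t := t) hs).range := by
  obtain ⟨g, rfl⟩ := hg
  set ψ := coveringHom (t := t) hs
  refine generated_by _ ((ψ.range.comap (MulAut.conj (of 1)).toMonoidHom).comap ψ) ?_ g
  intro i
  fin_cases i
  · exact ⟨of 0 * (of 1)⁻¹, by simp [ψ, coveringHom, (relations_of r s t u).b_conj_a]⟩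
  · exact ⟨of 1, by simp [ψ, coveringHom, mul_assoc]⟩
  · exact ⟨(of 0 ^ (2 : ℤ)) ^ (2 * D * r * t) * of 1 ^ (D * r * u) * of 2,
      by simp [ψ, coveringHom, (relations_of r s t u).b_conj_c hdet hD]⟩

theorem range_coveringHom (hs : s = 2 * s') (hdet : r * u - s * t = D) (hD : D * D = 1)
    (φ : SapphireGroup r s t u →* Multiplicative (ZMod 2)) (h0 : φ (of 0) = 1)
    (h1 : φ (of 1) = .ofAdd 1) (h2 : φ (of 2) = 1) :
    (coveringHom (t := t) hs).range = φ.ker := by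
  set ψ := coveringHom (t := t) hs
  have hle : ψ.range ≤ φ.ker := (MonoidHom.range_le_ker_iff _ _).mpr <|
    hom_ext (by simp [ψ, coveringHom, h0]) (by simp [ψ, coveringHom, h1]; decide)
      (by simp [ψ, coveringHom, h2])
  have hgen : Subgroup.closure (insert (of 1) (ψ.range : Set (SapphireGroup r s t u))) = ⊤ := by
    rw [eq_top_iff, ← closure_range_of]
    refine Subgroup.closure_mono ?_
    rintro _ ⟨i, rfl⟩
    fin_cases i
    · exact Or.inr ⟨of 0, lift_of_zero _⟩
    · exact Or.inl rfl
    · exact Or.inr ⟨of 2, lift_of_two _⟩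
  have hb : of 1 * of 1 ∈ ψ.range := ⟨of 1, lift_of_one _⟩
  refine le_antisymm hle fun g hg => ?_
  refine (Subgroup.mem_or_inv_mul_mem_of_mul_self_mem hb
    (fun _ => conj_mem_range_coveringHom hs hdet hD) hgen g).resolve_right fun hbg => ?_
  have := hle hbg
  simp [MonoidHom.mem_ker.mp hg, h1] at this

end SapphireGroup

theorem stmt1 (r s t u : ℤ) (h : r * u - s * t = 1 ∨ r * u - s * t = -1) (hs : Even s) :
    (∃! φ : SapphireGroup r s t u →* Multiplicative (ZMod 2),
      φ (PresentedGroup.of 0) = Multiplicative.ofAdd (0 : ZMod 2) ∧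
      φ (PresentedGroup.of 1) = Multiplicative.ofAdd (1 : ZMod 2) ∧
      φ (PresentedGroup.of 2) = Multiplicative.ofAdd (0 : ZMod 2)) ∧
    ∀ φ : SapphireGroup r s t u →* Multiplicative (ZMod 2),
      φ (PresentedGroup.of 0) = Multiplicative.ofAdd (0 : ZMod 2) →
      φ (PresentedGroup.of 1) = Multiplicative.ofAdd (1 : ZMod 2) →
      φ (PresentedGroup.of 2) = Multiplicative.ofAdd (0 : ZMod 2) →
      Nonempty (φ.ker ≃* SapphireGroup r (s / 2) (2 * t) u) := by
  have hs2 : s = 2 * (s / 2) := by obtain ⟨m, rfl⟩ := hs; omega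
  have hD : (r * u - s * t) * (r * u - s * t) = 1 := by rcases h with h | h <;> rw [h] <;> norm_num
  refine ⟨⟨SapphireGroup.lift (sapphireRelations_zmod_two hs), by simp, fun φ hφ => ?_⟩,
    fun φ h0 h1 h2 => ?_⟩
  · exact SapphireGroup.hom_ext (by simp [hφ.1]) (by simp [hφ.2.1]) (by simp [hφ.2.2])
  · rw [ofAdd_zero] at h0 h2
    have hrange := SapphireGroup.range_coveringHom hs2 rfl hD φ h0 h1 h2
    exact ⟨(MulEquiv.subgroupCongr hrange.symm).trans
      (MonoidHom.ofInjective (SapphireGroup.coveringHom_injective hs2 rfl hD)).symm⟩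
end

section
/- Let r,s,t,u be integers with ru−st=1 and s even. Then there exists an automorphism θ of G(r,s,t,u) fixing the generators a and b (so θ(c) = w·c for some w in the subgroup generated by a² and b whose total exponent of b is odd) such that φ₆ ∘ θ = φ₂, where φ₂, φ₆ : G(r,s,t,u) → ℤ/2ℤ are the homomorphisms determined on the generators (a,b,c) by (0,1,0) and (0,1,1) respectively. -/
/-!
Write `w = a^(2t) b^u`. The third relator says exactly that `c` conjugates `w` to its inverse.
Hence `(w^k c)^2 = c^2` and `w^k c` still conjugates `w` to its inverse, so `a ↦ a, b ↦ b,
c ↦ w^k c` respects all relators; as it fixes `w`, these endomorphisms form an action of `ℤ`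
and are automorphisms. Take `θ` for `k = 1`. Since `s` is even and `ru - st = 1`, `u` is odd, so
a character to `ℤ/2` that kills `a` and sends `b` to `1` sends `w` to `1`, whence
`φ₆(θ c) = φ₆(w) + φ₆(c) = 0 = φ₂(c)`.
-/

section ConjInv

variable {G : Type*} [Group G] {c w : G}

theorem zpow_mul_sq_of_mul_mul_inv_eq_inv (h : c * w * c⁻¹ = w⁻¹) (k : ℤ) :
    (w ^ k * c) ^ 2 = c ^ 2 := by
  have hk : c * w ^ k * c⁻¹ = (w ^ k)⁻¹ := by rw [← conj_zpow, h, inv_zpow]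
  calc (w ^ k * c) ^ 2 = w ^ k * (c * w ^ k * c⁻¹) * c ^ 2 := by rw [sq, sq]; group
    _ = c ^ 2 := by rw [hk]; group

theorem zpow_mul_mul_mul_inv_eq_inv (h : c * w * c⁻¹ = w⁻¹) (k : ℤ) :
    w ^ k * c * w * (w ^ k * c)⁻¹ = w⁻¹ := by
  calc w ^ k * c * w * (w ^ k * c)⁻¹ = w ^ k * (c * w * c⁻¹) * w ^ (-k) := by group
    _ = w⁻¹ := by rw [h]; group

end ConjInv

theorem forall_mem_sapphireRels_lift_eq_one_iff {G : Type*} [Group G] {r s t u : ℤ}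
    {f : Fin 3 → G} :
    (∀ x ∈ sapphireRels r s t u, FreeGroup.lift f x = 1) ↔
      f 0 * f 1 * (f 0)⁻¹ * f 1 = 1 ∧
      f 2 ^ 2 * f 0 ^ (-(2 * r)) * f 1 ^ (-s) = 1 ∧
      f 2 * (f 0 ^ (2 * t) * f 1 ^ u) * (f 2)⁻¹ = (f 0 ^ (2 * t) * f 1 ^ u)⁻¹ := by
  simp only [sapphireRels, Set.mem_insert_iff, Set.mem_singleton_iff, forall_eq_or_imp,
    forall_eq, map_mul, map_inv, map_zpow, FreeGroup.lift_apply_of]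
  rw [zpow_ofNat, ← mul_inv_eq_one (b := (f 0 ^ (2 * t) * f 1 ^ u)⁻¹), inv_inv]
  simp only [mul_assoc]

namespace SapphireGroup

variable {r s t u : ℤ}

abbrev a : SapphireGroup r s t u := PresentedGroup.of 0
abbrev b : SapphireGroup r s t u := PresentedGroup.of 1
abbrev c : SapphireGroup r s t u := PresentedGroup.of 2

abbrev w : SapphireGroup r s t u := a ^ (2 * t) * b ^ u

theorem relations :
    a * b * a⁻¹ * b = (1 : SapphireGroup r s t u) ∧
      c ^ 2 * a ^ (-(2 * r)) * b ^ (-s) = (1 : SapphireGroup r s t u) ∧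
      c * w * c⁻¹ = (w : SapphireGroup r s t u)⁻¹ := by
  refine forall_mem_sapphireRels_lift_eq_one_iff.mp fun x hx => ?_
  have : FreeGroup.lift PresentedGroup.of = PresentedGroup.mk (sapphireRels r s t u) :=
    FreeGroup.ext_hom _ _ fun _ => rfl
  rw [this]
  exact PresentedGroup.one_of_mem hx

theorem c_mul_w_mul_c_inv : c * w * c⁻¹ = (w : SapphireGroup r s t u)⁻¹ :=
  relations.2.2

def shear (k : ℤ) : SapphireGroup r s t u →* SapphireGroup r s t u :=
  PresentedGroup.toGroup (f := ![a, b, w ^ k * c]) <|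
    forall_mem_sapphireRels_lift_eq_one_iff.mpr
      ⟨relations.1,
        show (w ^ k * c) ^ 2 * _ * _ = 1 by
          rw [zpow_mul_sq_of_mul_mul_inv_eq_inv c_mul_w_mul_c_inv]; exact relations.2.1,
        zpow_mul_mul_mul_inv_eq_inv c_mul_w_mul_c_inv k⟩

@[simp] theorem shear_a (k : ℤ) : shear k a = (a : SapphireGroup r s t u) := rfl
@[simp] theorem shear_b (k : ℤ) : shear k b = (b : SapphireGroup r s t u) := rfl
@[simp] theorem shear_c (k : ℤ) : shear k c = (w ^ k * c : SapphireGroup r s t u) :=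
  PresentedGroup.toGroup.of _

theorem shear_comp_shear (k l : ℤ) :
    (shear k).comp (shear l) = (shear (k + l) : SapphireGroup r s t u →* _) := by
  ext i
  fin_cases i <;> simp [zpow_add, add_comm k l, mul_assoc]

theorem shear_zero : (shear 0 : SapphireGroup r s t u →* _) = MonoidHom.id _ := by
  ext i
  fin_cases i <;> simp

def shearEquiv (k : ℤ) : SapphireGroup r s t u ≃* SapphireGroup r s t u :=
  (shear k).toMulEquiv (shear (-k)) (by rw [shear_comp_shear, neg_add_cancel, shear_zero])
    (by rw [shear_comp_shear, add_neg_cancel, shear_zero])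

theorem shearEquiv_apply (k : ℤ) (x : SapphireGroup r s t u) : shearEquiv k x = shear k x := rfl

theorem map_w_of_odd (φ : SapphireGroup r s t u →* Multiplicative (ZMod 2))
    (ha : φ a = Multiplicative.ofAdd 0) (hb : φ b = Multiplicative.ofAdd 1) (hu : Odd u) :
    φ w = Multiplicative.ofAdd 1 := by
  rw [map_mul, map_zpow, map_zpow, ha, hb, ofAdd_zero, one_zpow, one_mul, ← ofAdd_zsmul,
    zsmul_one, hu.intCast_zmod_two]

end SapphireGroup

theorem Int.odd_of_mul_sub_mul_eq_one {r s t u : ℤ} (h : r * u - s * t = 1) (hs : Even s) :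
    Odd u := by
  have hru : Odd (r * u) := by
    rw [show r * u = s * t + 1 by omega]
    exact (hs.mul_right t).add_one
  exact (Int.odd_mul.mp hru).2

theorem stmt10 (r s t u : ℤ) (h : r * u - s * t = 1) (hs : Even s) :
    ∃ θ : SapphireGroup r s t u ≃* SapphireGroup r s t u,
      θ (PresentedGroup.of 0) = PresentedGroup.of 0 ∧
      θ (PresentedGroup.of 1) = PresentedGroup.of 1 ∧
      (∃ m n : ℤ, Odd n ∧
        θ (PresentedGroup.of 2) =
          ((PresentedGroup.of 0 : SapphireGroup r s t u) ^ 2) ^ m *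
            (PresentedGroup.of 1 : SapphireGroup r s t u) ^ n * PresentedGroup.of 2) ∧
      ∀ φ₂ φ₆ : SapphireGroup r s t u →* Multiplicative (ZMod 2),
        (φ₂ (PresentedGroup.of 0) = Multiplicative.ofAdd (0 : ZMod 2) ∧
         φ₂ (PresentedGroup.of 1) = Multiplicative.ofAdd (1 : ZMod 2) ∧
         φ₂ (PresentedGroup.of 2) = Multiplicative.ofAdd (0 : ZMod 2)) →
        (φ₆ (PresentedGroup.of 0) = Multiplicative.ofAdd (0 : ZMod 2) ∧
         φ₆ (PresentedGroup.of 1) = Multiplicative.ofAdd (1 : ZMod 2) ∧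
         φ₆ (PresentedGroup.of 2) = Multiplicative.ofAdd (1 : ZMod 2)) →
        φ₆.comp θ.toMonoidHom = φ₂ := by
  have hu : Odd u := Int.odd_of_mul_sub_mul_eq_one h hs
  refine ⟨SapphireGroup.shearEquiv 1, rfl, rfl, ⟨t, u, hu, ?_⟩, ?_⟩
  · rw [SapphireGroup.shearEquiv_apply, SapphireGroup.shear_c, zpow_one, ← zpow_natCast,
      ← zpow_mul, Nat.cast_ofNat]
  · rintro φ₂ φ₆ ⟨h₂a, h₂b, h₂c⟩ ⟨h₆a, h₆b, h₆c⟩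
    ext i
    fin_cases i
    · exact h₆a.trans h₂a.symm
    · exact h₆b.trans h₂b.symm
    · change φ₆ (SapphireGroup.shear 1 SapphireGroup.c) = φ₂ SapphireGroup.c
      rw [SapphireGroup.shear_c, zpow_one, map_mul, SapphireGroup.map_w_of_odd φ₆ h₆a h₆b hu,
        h₆c, h₂c]
      rfl
end
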